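/- Given any three finite-state walks on ℤ² (each with its own finite state set, transition map, initial state and initial cell, with position sequences x₁, x₂, x₃), there exists a cell z ∈ ℤ × ℤ such that x₁ n ≠ z, x₂ n ≠ z and x₃ n ≠ z for all n ∈ ℕ. (Three deterministic constant-memory agents that never communicate cannot discover the integer lattice: some cell is never visited.) -/

import Mathlib

/-!
A finite-state walk is eventually periodic, so with `v` its displacement over one period it
stays on the finitely many lines `x m + ℤ • v`, `m` running over one preperiod and one period.
A vertical line `{X} × ℤ` whose abscissa differs from those of all base points `x m` meets
each such line in at most one cell, so it has a cell on none of the lines of the three walks.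
-/

/-- The five allowed moves of an agent on the integer lattice:
stay put, east, west, north, south. -/
def Moves : Set (ℤ × ℤ) := {(0, 0), (1, 0), (-1, 0), (0, 1), (0, -1)}

section EventualPeriodicity

variable {Q G : Type*}

theorem exists_add_period_eq_of_succ_eq [Finite Q] {f : Q → Q} {s : ℕ → Q}
    (hs : ∀ n, s (n + 1) = f (s n)) :
    ∃ i p : ℕ, 0 < p ∧ ∀ n, i ≤ n → s (n + p) = s n := by
  obtain ⟨i, j, hij, hsij⟩ :=
    Set.finite_univ.exists_lt_map_eq_of_forall_mem (f := s) fun _ => Set.mem_univ _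
  refine ⟨i, j - i, by omega, fun n hn => ?_⟩
  induction n, hn using Nat.le_induction with
  | base => rw [Nat.add_sub_cancel' hij.le, hsij]
  | succ n hn ih => rw [Nat.add_right_comm, hs, ih, hs]

theorem add_period_eq_of_increment_periodic [AddCommGroup G] {x d : ℕ → G}
    (hx : ∀ n, x (n + 1) = x n + d n) {i p : ℕ} (hd : ∀ n, i ≤ n → d (n + p) = d n) :
    ∀ n, i ≤ n → x (n + p) = x n + (x (i + p) - x i) := by
  intro n hn
  induction n, hn using Nat.le_induction with
  | base => abel
  | succ n hn ih => rw [Nat.add_right_comm, hx, ih, hd n hn, hx]; abel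

theorem add_mul_period_eq_add_nsmul [AddCommMonoid G] {x : ℕ → G} {i p : ℕ} {v : G}
    (h : ∀ n, i ≤ n → x (n + p) = x n + v) (k : ℕ) {n : ℕ} (hn : i ≤ n) :
    x (n + k * p) = x n + k • v := by
  induction k with
  | zero => simp
  | succ k ih => rw [Nat.succ_mul, ← add_assoc, h _ (by omega), ih, succ_nsmul, add_assoc]

theorem exists_lt_eq_add_nsmul [AddCommMonoid G] {x : ℕ → G} {i p : ℕ} {v : G}
    (h : ∀ n, i ≤ n → x (n + p) = x n + v) (hp : 0 < p) (n : ℕ) :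
    ∃ m < i + p, ∃ k : ℕ, x n = x m + k • v := by
  rcases lt_or_ge n i with hn | hn
  · exact ⟨n, by omega, 0, by simp⟩
  · have hmod := Nat.mod_lt (n - i) hp
    have hdiv := Nat.mod_add_div (n - i) p
    refine ⟨i + (n - i) % p, by omega, (n - i) / p, ?_⟩
    rw [← add_mul_period_eq_add_nsmul h _ (by omega), mul_comm]
    congr 1
    omega

theorem exists_finset_forall_eq_add_zsmul [Finite Q] [AddCommGroup G] (δ : Q → Q × G)
    {s : ℕ → Q} {x : ℕ → G} (hs : ∀ n, s (n + 1) = (δ (s n)).1)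
    (hx : ∀ n, x (n + 1) = x n + (δ (s n)).2) :
    ∃ R : Finset (G × G), ∀ n, ∃ r ∈ R, ∃ k : ℤ, x n = r.1 + k • r.2 := by
  classical
  obtain ⟨i, p, hp, hsp⟩ := exists_add_period_eq_of_succ_eq (f := fun q => (δ q).1) hs
  have hxp := add_period_eq_of_increment_periodic (d := fun n => (δ (s n)).2) hx
    fun n hn => by rw [hsp n hn]
  refine ⟨(Finset.range (i + p)).image fun m => (x m, x (i + p) - x i), fun n => ?_⟩
  obtain ⟨m, hm, k, hk⟩ := exists_lt_eq_add_nsmul hxp hp n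
  exact ⟨_, Finset.mem_image_of_mem _ (Finset.mem_range.2 hm), k, by rwa [natCast_zsmul]⟩

end EventualPeriodicity

theorem subsingleton_setOf_add_zsmul_eq_mk {a v : ℤ × ℤ} {X : ℤ} (ha : a.1 ≠ X) :
    {y : ℤ | ∃ k : ℤ, a + k • v = (X, y)}.Subsingleton := by
  rintro y ⟨k, hk⟩ y' ⟨k', hk'⟩
  simp only [Prod.ext_iff, Prod.fst_add, Prod.snd_add, Prod.smul_fst, Prod.smul_snd,
    smul_eq_mul] at hk hk'
  -- `k * v.1 = X - a.1 ≠ 0`, so the abscissa equation determines `k`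
  have hv : v.1 ≠ 0 := by rintro hv; rw [hv, mul_zero, add_zero] at hk; exact ha hk.1
  have hkk : k = k' := mul_right_cancel₀ hv (by linarith)
  rw [← hk.2, ← hk'.2, hkk]

theorem exists_forall_add_zsmul_ne (R : Finset ((ℤ × ℤ) × (ℤ × ℤ))) :
    ∃ z : ℤ × ℤ, ∀ r ∈ R, ∀ k : ℤ, r.1 + k • r.2 ≠ z := by
  obtain ⟨X, hX⟩ := Infinite.exists_notMem_finset (R.image fun r => r.1.1)
  have hfin : (⋃ r ∈ R, {y : ℤ | ∃ k : ℤ, r.1 + k • r.2 = (X, y)}).Finite :=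
    R.finite_toSet.biUnion fun r hr =>
      (subsingleton_setOf_add_zsmul_eq_mk fun h => hX (Finset.mem_image.2 ⟨r, hr, h⟩)).finite
  obtain ⟨Y, hY⟩ := hfin.infinite_compl.nonempty
  simp only [Set.mem_compl_iff, Set.mem_iUnion, not_exists] at hY
  exact ⟨(X, Y), fun r hr k h => hY r hr ⟨k, h⟩⟩

theorem three_walks_miss_a_cell_general
    {Q₁ Q₂ Q₃ : Type} [Fintype Q₁] [Fintype Q₂]
    [Fintype Q₃]
    (δ₁ : Q₁ → Q₁ × (ℤ × ℤ))
    (δ₂ : Q₂ → Q₂ × (ℤ × ℤ))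
    (δ₃ : Q₃ → Q₃ × (ℤ × ℤ))
    (s₁ : ℕ → Q₁) (s₂ : ℕ → Q₂) (s₃ : ℕ → Q₃)
    (x₁ x₂ x₃ : ℕ → ℤ × ℤ)
    (hs₁ : ∀ n, s₁ (n + 1) = (δ₁ (s₁ n)).1)
    (hx₁ : ∀ n, x₁ (n + 1) = x₁ n + (δ₁ (s₁ n)).2)
    (hs₂ : ∀ n, s₂ (n + 1) = (δ₂ (s₂ n)).1)
    (hx₂ : ∀ n, x₂ (n + 1) = x₂ n + (δ₂ (s₂ n)).2)
    (hs₃ : ∀ n, s₃ (n + 1) = (δ₃ (s₃ n)).1)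
    (hx₃ : ∀ n, x₃ (n + 1) = x₃ n + (δ₃ (s₃ n)).2) :
    ∃ z : ℤ × ℤ, ∀ n : ℕ, x₁ n ≠ z ∧ x₂ n ≠ z ∧ x₃ n ≠ z := by
  obtain ⟨R₁, h₁⟩ := exists_finset_forall_eq_add_zsmul δ₁ hs₁ hx₁
  obtain ⟨R₂, h₂⟩ := exists_finset_forall_eq_add_zsmul δ₂ hs₂ hx₂
  obtain ⟨R₃, h₃⟩ := exists_finset_forall_eq_add_zsmul δ₃ hs₃ hx₃
  obtain ⟨z, hz⟩ := exists_forall_add_zsmul_ne (R₁ ∪ R₂ ∪ R₃)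
  refine ⟨z, fun n => ⟨fun h => ?_, fun h => ?_, fun h => ?_⟩⟩
  · obtain ⟨r, hr, k, hk⟩ := h₁ n
    exact hz r (by simp [hr]) k (hk ▸ h)
  · obtain ⟨r, hr, k, hk⟩ := h₂ n
    exact hz r (by simp [hr]) k (hk ▸ h)
  · obtain ⟨r, hr, k, hk⟩ := h₃ n
    exact hz r (by simp [hr]) k (hk ▸ h)

/-- Three deterministic constant-memory agents that never communicate cannot
discover the integer lattice: some cell is never visited by any of them. -/
theorem three_walks_miss_a_cell
    {Q₁ Q₂ Q₃ : Type} [Fintype Q₁] [Nonempty Q₁] [Fintype Q₂] [Nonempty Q₂]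
    [Fintype Q₃] [Nonempty Q₃]
    (δ₁ : Q₁ → Q₁ × (ℤ × ℤ)) (hδ₁ : ∀ q, (δ₁ q).2 ∈ Moves)
    (δ₂ : Q₂ → Q₂ × (ℤ × ℤ)) (hδ₂ : ∀ q, (δ₂ q).2 ∈ Moves)
    (δ₃ : Q₃ → Q₃ × (ℤ × ℤ)) (hδ₃ : ∀ q, (δ₃ q).2 ∈ Moves)
    (q₁ : Q₁) (q₂ : Q₂) (q₃ : Q₃) (o₁ o₂ o₃ : ℤ × ℤ)
    (s₁ : ℕ → Q₁) (s₂ : ℕ → Q₂) (s₃ : ℕ → Q₃)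
    (x₁ x₂ x₃ : ℕ → ℤ × ℤ)
    (hs₁0 : s₁ 0 = q₁) (hs₁ : ∀ n, s₁ (n + 1) = (δ₁ (s₁ n)).1)
    (hx₁0 : x₁ 0 = o₁) (hx₁ : ∀ n, x₁ (n + 1) = x₁ n + (δ₁ (s₁ n)).2)
    (hs₂0 : s₂ 0 = q₂) (hs₂ : ∀ n, s₂ (n + 1) = (δ₂ (s₂ n)).1)
    (hx₂0 : x₂ 0 = o₂) (hx₂ : ∀ n, x₂ (n + 1) = x₂ n + (δ₂ (s₂ n)).2)
    (hs₃0 : s₃ 0 = q₃) (hs₃ : ∀ n, s₃ (n + 1) = (δ₃ (s₃ n)).1)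
    (hx₃0 : x₃ 0 = o₃) (hx₃ : ∀ n, x₃ (n + 1) = x₃ n + (δ₃ (s₃ n)).2) :
    ∃ z : ℤ × ℤ, ∀ n : ℕ, x₁ n ≠ z ∧ x₂ n ≠ z ∧ x₃ n ≠ z :=
  three_walks_miss_a_cell_general δ₁ δ₂ δ₃ s₁ s₂ s₃ x₁ x₂ x₃ hs₁ hx₁ hs₂ hx₂ hs₃ hx₃
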